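/- Assume α_k → ∞ and α_k·ε_k → 0, and let the sequences satisfy the inexact penalty KKT conditions for every k. Suppose K ⊆ ℕ is infinite and x^k → x* along K. Then α_k·y_i^k → 0 along K for every index i with x*_i ≠ 0. -/

import Mathlib

/-!
Along `K` the coordinate `x_i^k` stays near `x*_i > 0`, so `α_k x_i^k → ∞`. The `y`-stationarity
condition and the monotonicity of `p_i'` (convexity) give
`(ν_y^k)_i ≥ p_i'(y_i^k) + α_k x_i^k - ε_k ≥ p_i'(0) + α_k x_i^k - ε_k`, which eventually exceeds
`ε_k` because `ε_k = (α_k ε_k) / α_k → 0`. Complementarity `min (y_i^k, (ν_y^k)_i) ≤ ε_k` then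
forces `y_i^k ≤ ε_k`, whence `0 ≤ α_k y_i^k ≤ α_k ε_k → 0`.
-/

open Filter Topology

noncomputable section

abbrev E (n : ℕ) : Type := EuclideanSpace ℝ (Fin n)

def vec {ι : Type*} [Fintype ι] (v : ι → ℝ) : EuclideanSpace ℝ ι :=
  (WithLp.equiv 2 (ι → ℝ)).symm v

/-- The inexact penalty KKT conditions at stage k (step 2 of the exact penalty
algorithm). -/
def inexactKKT {n m q : ℕ} (f : E n → ℝ) (g : Fin m → E n → ℝ) (h : Fin q → E n → ℝ)
    (p : Fin n → ℝ → ℝ) (α ε : ℝ)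
    (x y : E n) (νx νy : E n) (lam : Fin m → ℝ) (mu : Fin q → ℝ) : Prop :=
  (∀ i, 0 ≤ x i) ∧ (∀ i, 0 ≤ y i) ∧ (∀ i, 0 ≤ lam i) ∧
  (∀ i, 0 ≤ νx i) ∧ (∀ i, 0 ≤ νy i) ∧
  ‖gradient f x + (∑ i, lam i • gradient (g i) x) + (∑ j, mu j • gradient (h j) x) +
      α • y - νx‖ ≤ ε ∧
  ‖vec (fun i => deriv (p i) (y i) + α * x i - νy i)‖ ≤ ε ∧
  (∀ i, |min (-(g i x)) (lam i)| ≤ ε) ∧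
  ‖vec (fun j => h j x)‖ ≤ ε ∧
  (∀ i, min (x i) (νx i) ≤ ε) ∧
  (∀ i, min (y i) (νy i) ≤ ε)

lemma tendsto_zero_of_mul_tendsto_zero_of_tendsto_atTop {ι : Type*} {l : Filter ι}
    {a b : ι → ℝ} (ha : Tendsto a l atTop) (hab : Tendsto (fun k => a k * b k) l (𝓝 0)) :
    Tendsto b l (𝓝 0) := by
  have hquot : Tendsto (fun k => a k * b k * (a k)⁻¹) l (𝓝 0) := by
    simpa using hab.mul (tendsto_inv_atTop_zero.comp ha)
  refine hquot.congr' ?_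
  filter_upwards [ha.eventually_gt_atTop 0] with k hk
  field_simp

namespace inexactKKT

variable {n m q : ℕ} {f : E n → ℝ} {g : Fin m → E n → ℝ} {h : Fin q → E n → ℝ}
  {p : Fin n → ℝ → ℝ} {α ε : ℝ} {x y νx νy : E n} {lam : Fin m → ℝ} {mu : Fin q → ℝ}

lemma deriv_add_mul_sub_le (hKKT : inexactKKT f g h p α ε x y νx νy lam mu) (i : Fin n) :
    deriv (p i) (y i) + α * x i - ε ≤ νy i := by
  obtain ⟨-, -, -, -, -, -, hstat, -⟩ := hKKT
  have hi : |deriv (p i) (y i) + α * x i - νy i| ≤ ε :=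
    (PiLp.norm_apply_le (vec fun j => deriv (p j) (y j) + α * x j - νy j) i).trans hstat
  linarith [(abs_le.mp hi).2]

lemma y_le_of_two_mul_lt (hKKT : inexactKKT f g h p α ε x y νx νy lam mu) {i : Fin n}
    (hdiff : Differentiable ℝ (p i)) (hconv : ConvexOn ℝ Set.univ (p i))
    (hgap : 2 * ε < deriv (p i) 0 + α * x i) : y i ≤ ε := by
  have hν := hKKT.deriv_add_mul_sub_le i
  obtain ⟨-, hy, -, -, -, -, -, -, -, -, hcompl⟩ := hKKT
  have hderiv : deriv (p i) 0 ≤ deriv (p i) (y i) :=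
    hconv.monotoneOn_deriv (fun t _ => hdiff t) (Set.mem_univ 0) (Set.mem_univ _) (hy i)
  rcases min_le_iff.mp (hcompl i) with hyε | hνε
  · exact hyε
  · linarith

end inexactKKT

theorem stmt_19_general {n m q : ℕ}
    (f : E n → ℝ) (g : Fin m → E n → ℝ) (h : Fin q → E n → ℝ)
    (p : Fin n → ℝ → ℝ)
    (hp : ∀ i, ContDiff ℝ 1 (p i))
    (hconv : ∀ i, ConvexOn ℝ Set.univ (p i))
    (αk εk : ℕ → ℝ)
    (hα : Tendsto αk atTop atTop)
    (hαε : Tendsto (fun k => αk k * εk k) atTop (𝓝 0))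
    (xk yk νxk νyk : ℕ → E n) (lamk : ℕ → Fin m → ℝ) (muk : ℕ → Fin q → ℝ)
    (hKKT : ∀ k, inexactKKT f g h p (αk k) (εk k) (xk k) (yk k) (νxk k) (νyk k)
      (lamk k) (muk k))
    (K : Set ℕ) (xstar : E n)
    (hconv' : Tendsto xk (atTop ⊓ Filter.principal K) (𝓝 xstar)) :
    ∀ i, xstar i ≠ 0 →
      Tendsto (fun k => αk k * yk k i) (atTop ⊓ Filter.principal K) (𝓝 0) := by
  intro i hxi
  set L := atTop ⊓ Filter.principal K
  rcases L.eq_or_neBot with hL | hL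
  · rw [hL]
    exact tendsto_bot
  have hx : Tendsto (fun k => xk k i) L (𝓝 (xstar i)) :=
    ((PiLp.continuous_apply 2 _ i).tendsto _).comp hconv'
  have hxpos : 0 < xstar i :=
    (ge_of_tendsto' hx fun k => (hKKT k).1 i).lt_of_ne' hxi
  have hαL : Tendsto αk L atTop := hα.mono_left inf_le_left
  have hεL : Tendsto εk L (𝓝 0) :=
    tendsto_zero_of_mul_tendsto_zero_of_tendsto_atTop hα hαε |>.mono_left inf_le_left
  have hgap : Tendsto (fun k => deriv (p i) 0 + αk k * xk k i - 2 * εk k) L atTop := by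
    have hconst : Tendsto (fun k => deriv (p i) 0 - 2 * εk k) L (𝓝 (deriv (p i) 0)) := by
      simpa using tendsto_const_nhds.sub (hεL.const_mul 2)
    exact (hαL.atTop_mul_pos hxpos hx).atTop_add hconst |>.congr fun k => by ring
  have hy : ∀ᶠ k in L, yk k i ≤ εk k := by
    filter_upwards [hgap.eventually_gt_atTop 0] with k hk
    exact (hKKT k).y_le_of_two_mul_lt ((hp i).differentiable one_ne_zero) (hconv i) (by linarith)
  refine squeeze_zero' ?_ ?_ (hαε.mono_left inf_le_left)
  · filter_upwards [hαL.eventually_ge_atTop 0] with k hk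
    exact mul_nonneg hk ((hKKT k).2.1 i)
  · filter_upwards [hy, hαL.eventually_ge_atTop 0] with k hyk hk
    exact mul_le_mul_of_nonneg_left hyk hk

/-- if α_k → ∞ and α_k·ε_k → 0, then α_k·y_i^k → 0 along K for
every index i with x*_i ≠ 0. -/
theorem stmt_19 {n m q : ℕ} (hn : 1 ≤ n) {ρ : ℝ} (hρ : 0 < ρ)
    (f : E n → ℝ) (g : Fin m → E n → ℝ) (h : Fin q → E n → ℝ)
    (hf : ContDiff ℝ 1 f) (hg : ∀ i, ContDiff ℝ 1 (g i)) (hh : ∀ j, ContDiff ℝ 1 (h j))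
    (p : Fin n → ℝ → ℝ) (s : Fin n → ℝ)
    (hp : ∀ i, ContDiff ℝ 1 (p i))
    (hconv : ∀ i, ConvexOn ℝ Set.univ (p i))
    (hspos : ∀ i, 0 < s i)
    (hmin : ∀ i t, p i (s i) ≤ p i t)
    (hstrict : ∀ i t, t ≠ s i → p i (s i) < p i t)
    (hscale : ∀ i, p i 0 - p i (s i) = ρ)
    (αk εk : ℕ → ℝ) (hαpos : ∀ k, 0 < αk k) (hεnn : ∀ k, 0 ≤ εk k)
    (hα : Tendsto αk atTop atTop)
    (hαε : Tendsto (fun k => αk k * εk k) atTop (𝓝 0))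
    (xk yk νxk νyk : ℕ → E n) (lamk : ℕ → Fin m → ℝ) (muk : ℕ → Fin q → ℝ)
    (hKKT : ∀ k, inexactKKT f g h p (αk k) (εk k) (xk k) (yk k) (νxk k) (νyk k)
      (lamk k) (muk k))
    (K : Set ℕ) (hK : K.Infinite) (xstar : E n)
    (hconv' : Tendsto xk (atTop ⊓ Filter.principal K) (𝓝 xstar)) :
    ∀ i, xstar i ≠ 0 →
      Tendsto (fun k => αk k * yk k i) (atTop ⊓ Filter.principal K) (𝓝 0) :=
  stmt_19_general f g h p hp hconv αk εk hα hαε xk yk νxk νyk lamk muk hKKT K xstar hconv'
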